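/- For every integer n ≥ 3 and every natural number k ≥ 1, if the real number λ is an eigenvalue of the Laplacian Λ_n of Z_n, then λ is an eigenvalue of the Laplacian Λ_{2^k·n} of Z_{2^k·n}. -/
import Mathlib


open Polynomial

/-- The Laplacian of the Cayley graph of `Z n` with generating set `{1, -1}`:
diagonal entries `2`, entries `-1` between neighbouring vertices, `0` otherwise. -/
noncomputable def cycleLaplacian (n : ℕ) : Matrix (ZMod n) (ZMod n) ℝ :=
  Matrix.of fun i j =>
    if i = j then 2 else if j = i + 1 ∨ j = i - 1 then -1 else 0

/-- The characteristic determinant `det (Λ_n - λ • I)` of the cycle Laplacian. -/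
noncomputable def lapCharDet (n : ℕ) (lam : ℝ) : ℝ :=
  if h : n = 0 then 0
  else
    haveI : NeZero n := ⟨h⟩
    (cycleLaplacian n - lam • (1 : Matrix (ZMod n) (ZMod n) ℝ)).det

/-- `lam` is an eigenvalue of the Laplacian of `Z n`. -/
def IsLapEigenvalue (n : ℕ) (lam : ℝ) : Prop := lapCharDet n lam = 0

lemma cycle_mulVec (m : ℕ) [NeZero m] (hm : 3 ≤ m) (lam : ℝ) (w : ZMod m → ℝ)
    (i : ZMod m) :
    (cycleLaplacian m - lam • (1 : Matrix (ZMod m) (ZMod m) ℝ)).mulVec w i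
      = (2 - lam) * w i - w (i + 1) - w (i - 1) := by
  have h1 : (1 : ZMod m) ≠ 0 := by
    intro h
    have := (ZMod.natCast_eq_zero_iff 1 m).mp (by exact_mod_cast h)
    have := Nat.le_of_dvd one_pos this; omega
  have h2 : (2 : ZMod m) ≠ 0 := by
    intro h
    have := (ZMod.natCast_eq_zero_iff 2 m).mp (by exact_mod_cast h)
    have := Nat.le_of_dvd two_pos this; omega
  have hne1 : (i + 1 : ZMod m) ≠ i := by
    intro h; apply h1; simpa using congrArg (· - i) h
  have hne2 : (i - 1 : ZMod m) ≠ i := by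
    intro h; apply h1; simpa [sub_sub_cancel] using congrArg (i - ·) h
  have hne3 : (i + 1 : ZMod m) ≠ i - 1 := by
    intro h; apply h2
    have h' := congrArg (· - (i - 1)) h
    simp only [sub_self] at h'
    rw [← h']; ring
  have hsum : ∀ j : ZMod m,
      ((cycleLaplacian m - lam • (1 : Matrix (ZMod m) (ZMod m) ℝ)) i j) * w j
        = (if j = i then (2 - lam) * w i else 0)
          + (if j = i + 1 then -w (i + 1) else 0)
          + (if j = i - 1 then -w (i - 1) else 0) := by
    intro j
    simp only [Matrix.sub_apply, Matrix.smul_apply, Matrix.one_apply, cycleLaplacian,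
      Matrix.of_apply, smul_eq_mul]
    rcases eq_or_ne j i with rfl | hji
    · rw [if_pos rfl, if_pos rfl, if_pos rfl, if_neg (fun h => hne1 h.symm),
        if_neg (fun h => hne2 h.symm)]
      ring
    · rw [if_neg (show ¬ i = j from fun h => hji h.symm)]
      rw [if_neg (show ¬ i = j from fun h => hji h.symm), if_neg hji]
      rcases eq_or_ne j (i + 1) with rfl | hj1
      · rw [if_pos (Or.inl rfl), if_pos rfl, if_neg hne3]
        ring
      · rcases eq_or_ne j (i - 1) with rfl | hj2
        · rw [if_pos (Or.inr rfl), if_pos rfl, if_neg (fun h => hne3 h.symm)]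
          ring
        · rw [if_neg (by tauto), if_neg hj1, if_neg hj2]
          ring
  rw [Matrix.mulVec, dotProduct]
  rw [Finset.sum_congr rfl (fun j _ => hsum j)]
  simp [Finset.sum_add_distrib, Finset.sum_ite_eq']
  ring

theorem stmt_4 (n : ℕ) (hn : 3 ≤ n) (k : ℕ) (hk : 1 ≤ k) (lam : ℝ)
    (h : IsLapEigenvalue n lam) : IsLapEigenvalue (2 ^ k * n) lam := by
  haveI : NeZero n := ⟨by omega⟩
  have h2k : 2 ≤ 2 ^ k := by
    calc 2 = 2 ^ 1 := by norm_num
    _ ≤ 2 ^ k := Nat.pow_le_pow_right (by norm_num) hk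
  have hm3 : 3 ≤ 2 ^ k * n := le_trans (by omega) (Nat.mul_le_mul h2k hn)
  haveI : NeZero (2 ^ k * n) := ⟨by omega⟩
  unfold IsLapEigenvalue lapCharDet at h ⊢
  rw [dif_neg (show n ≠ 0 by omega)] at h
  rw [dif_neg (show 2 ^ k * n ≠ 0 by omega)]
  obtain ⟨v, hv0, hv⟩ := (Matrix.exists_mulVec_eq_zero_iff).mpr h
  have hdvd : n ∣ 2 ^ k * n := dvd_mul_left n (2 ^ k)
  set π : ZMod (2 ^ k * n) →+* ZMod n := ZMod.castHom hdvd (ZMod n) with hπ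
  set w : ZMod (2 ^ k * n) → ℝ := fun i => v (π i) with hw
  apply (Matrix.exists_mulVec_eq_zero_iff).mp
  refine ⟨w, ?_, ?_⟩
  · obtain ⟨j, hj⟩ := Function.ne_iff.mp hv0
    intro hw0
    apply hj
    have h1 : π ((j.val : ℕ) : ZMod (2 ^ k * n)) = j := by
      rw [map_natCast]
      exact ZMod.natCast_rightInverse j
    have h2 : v (π ((j.val : ℕ) : ZMod (2 ^ k * n))) = 0 := congrFun hw0 _
    rw [h1] at h2
    simpa using h2
  · funext i
    rw [cycle_mulVec _ hm3]
    have hz := congrFun hv (π i)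
    rw [cycle_mulVec _ hn] at hz
    simpa [hw, map_add, map_sub, map_one] using hz
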